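/- arXiv:2104.06606 — 2 statements merged into one kernel-verified Lean document; each statement's English description precedes it below -/
import Mathlib

section
/- Let B ∈ ℝ^{n×n} be a symmetric irreducible nonsingular M-matrix with smallest eigenvalue μ and a corresponding positive eigenvector p, β > 0, and fix λ > μ. Let u be the unique positive solution of β·diag(u^[2])u + Bu = λu. If u₀ = αp with α large enough that u₀ > u componentwise and min_i β(αp_i)² > λ − μ, then the Newton iteration defined by (3β·diag(u_k^[2]) + B − λI)·u_{k+1} = 2β·diag(u_k^[2])·u_k converges to u monotonically: u < ⋯ < u₂ < u₁ < u₀ componentwise. -/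
open Matrix Filter Topology

/-! The argument rests on a comparison principle for Z-matrices: if `J` has nonpositive
off-diagonal entries and `J w > 0` for some `w > 0`, then `J x > 0` forces `x > 0` (look at an
index minimising `x i / w i`). Every Jacobian `J(v) = 3β·diag(v^[2]) + B - λI` is a Z-matrix
because `B` is an M-matrix, and `J(v) u = β u (3v^[2] - u^[2]) > 0` whenever `v > u`.
For the residual `F(v) = β v^[3] + Bv - λv` and a Newton step `v ↦ v'` the cubic identities
`J(v)(v - v') = F(v)`, `J(v)(v' - u) = β(v - u)^[2](2v + u)`, `F(v') = β(v' - v)^[2](v' + 2v)`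
therefore propagate `u < v` and `F(v) > 0`, and give `v' < v`. At `v = αp` the residual is
`αp(β(αp)^[2] - (λ - μ)) > 0`. The decreasing iterates converge, and their limit is a positive
zero of `F`, hence equals `u`. -/

/-- Spectral radius of a real matrix (over its complex spectrum). -/
noncomputable def specRad {n : ℕ} (A : Matrix (Fin n) (Fin n) ℝ) : ℝ :=
  sSup {r : ℝ | ∃ μ : ℂ, μ ∈ spectrum ℂ (A.map (fun x => (x : ℂ))) ∧ r = ‖μ‖}

/-- Entrywise nonnegative matrix. -/
def MatNonneg {n : ℕ} (A : Matrix (Fin n) (Fin n) ℝ) : Prop := ∀ i j, 0 ≤ A i j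

/-- `B` is an M-matrix: `B = s•I - A` with `A ≥ 0` and `s ≥ ρ(A)`. -/
def IsMMat {n : ℕ} (B : Matrix (Fin n) (Fin n) ℝ) : Prop :=
  ∃ s A, MatNonneg A ∧ specRad A ≤ s ∧ B = s • (1 : Matrix (Fin n) (Fin n) ℝ) - A

/-- `B` is a nonsingular M-matrix: `B = s•I - A` with `A ≥ 0` and `s > ρ(A)`. -/
def IsNsMMat {n : ℕ} (B : Matrix (Fin n) (Fin n) ℝ) : Prop :=
  ∃ s A, MatNonneg A ∧ specRad A < s ∧ B = s • (1 : Matrix (Fin n) (Fin n) ℝ) - A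

/-- Irreducibility: no nonempty proper index set `I` with `B i j = 0` for `i ∈ I`, `j ∉ I`. -/
def MatIrred {n : ℕ} (B : Matrix (Fin n) (Fin n) ℝ) : Prop :=
  ¬ ∃ I : Finset (Fin n), I.Nonempty ∧ I ≠ Finset.univ ∧ ∀ i ∈ I, ∀ j ∉ I, B i j = 0

/-- `A(u) = β·diag(u^[2]) + B`. -/
noncomputable def AU {n : ℕ} (β : ℝ) (B : Matrix (Fin n) (Fin n) ℝ) (u : Fin n → ℝ) :
    Matrix (Fin n) (Fin n) ℝ :=
  β • Matrix.diagonal (fun i => u i ^ 2) + B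

/-- Jacobian `J(u,λ) = 3β·diag(u^[2]) + B - λI`. -/
noncomputable def JU {n : ℕ} (β lam : ℝ) (B : Matrix (Fin n) (Fin n) ℝ) (u : Fin n → ℝ) :
    Matrix (Fin n) (Fin n) ℝ :=
  (3 * β) • Matrix.diagonal (fun i => u i ^ 2) + B - lam • (1 : Matrix (Fin n) (Fin n) ℝ)

/-- Smallest (real) eigenvalue. -/
noncomputable def smallestEig {n : ℕ} (B : Matrix (Fin n) (Fin n) ℝ) : ℝ :=
  sInf {μ : ℝ | ∃ v : Fin n → ℝ, v ≠ 0 ∧ B.mulVec v = μ • v}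

/-- Largest (real) eigenvalue. -/
noncomputable def largestEig {n : ℕ} (B : Matrix (Fin n) (Fin n) ℝ) : ℝ :=
  sSup {μ : ℝ | ∃ v : Fin n → ℝ, v ≠ 0 ∧ B.mulVec v = μ • v}

/-- Euclidean norm of a vector. -/
noncomputable def vecNorm {n : ℕ} (u : Fin n → ℝ) : ℝ := Real.sqrt (∑ i, u i ^ 2)

/-- 1-norm of a vector. -/
noncomputable def vecNorm1 {n : ℕ} (u : Fin n → ℝ) : ℝ := ∑ i, |u i|

/-- Spectral (operator 2-) norm of a matrix. -/
noncomputable def matNorm {n : ℕ} (A : Matrix (Fin n) (Fin n) ℝ) : ℝ :=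
  sSup {r : ℝ | ∃ x : Fin n → ℝ, vecNorm x ≤ 1 ∧ r = vecNorm (A.mulVec x)}

def IsZMatrix {ι R : Type*} [Zero R] [LE R] (J : Matrix ι ι R) : Prop :=
  ∀ i j, i ≠ j → J i j ≤ 0

namespace IsZMatrix

variable {ι R : Type*} [Fintype ι] [Field R] [LinearOrder R] [IsStrictOrderedRing R]
  {J : Matrix ι ι R}

theorem mulVec_apply_nonpos (hJ : IsZMatrix J) {y : ι → R} (hy : 0 ≤ y) {i : ι}
    (hi : y i = 0) : (J *ᵥ y) i ≤ 0 := by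
  refine Finset.sum_nonpos fun j _ => ?_
  rcases eq_or_ne i j with rfl | hij
  · simp [hi]
  · exact mul_nonpos_of_nonpos_of_nonneg (hJ i j hij) (hy j)

theorem pos_of_mulVec_pos (hJ : IsZMatrix J) {w x : ι → R} (hw : ∀ i, 0 < w i)
    (hJw : ∀ i, 0 < (J *ᵥ w) i) (hJx : ∀ i, 0 < (J *ᵥ x) i) (i : ι) : 0 < x i := by
  by_contra! hxi
  obtain ⟨i₀, -, hmin⟩ :=
    Finset.exists_min_image Finset.univ (fun j => x j / w j) ⟨i, Finset.mem_univ i⟩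
  set t := x i₀ / w i₀
  have ht : t ≤ 0 :=
    (hmin i (Finset.mem_univ i)).trans (div_nonpos_of_nonpos_of_nonneg hxi (hw i).le)
  have hy : 0 ≤ x - t • w := fun j => by
    have := (le_div_iff₀ (hw j)).1 (hmin j (Finset.mem_univ j))
    simp only [Pi.zero_apply, Pi.sub_apply, Pi.smul_apply, smul_eq_mul]
    linarith
  have hy₀ : (x - t • w) i₀ = 0 := by simp [t, div_mul_cancel₀ _ (hw i₀).ne']
  have key := hJ.mulVec_apply_nonpos hy hy₀
  simp only [mulVec_sub, mulVec_smul, Pi.sub_apply, Pi.smul_apply, smul_eq_mul] at key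
  nlinarith [hJx i₀, hJw i₀]

end IsZMatrix

theorem IsNsMMat.isZMatrix {n : ℕ} {B : Matrix (Fin n) (Fin n) ℝ} (hB : IsNsMMat B) :
    IsZMatrix B := by
  obtain ⟨s, A, hA, -, rfl⟩ := hB
  intro i j hij
  simpa [one_apply_ne hij] using hA i j

noncomputable def nepResidual {n : ℕ} (β lam : ℝ) (B : Matrix (Fin n) (Fin n) ℝ)
    (u : Fin n → ℝ) : Fin n → ℝ :=
  AU β B u *ᵥ u - lam • u

section Newton

variable {n : ℕ} {β lam : ℝ} {B : Matrix (Fin n) (Fin n) ℝ} {u v w : Fin n → ℝ}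

theorem nepResidual_apply (i : Fin n) :
    nepResidual β lam B u i = β * u i ^ 3 + (B *ᵥ u) i - lam * u i := by
  simp only [nepResidual, AU, add_mulVec, smul_mulVec, mulVec_diagonal, Pi.sub_apply,
    Pi.add_apply, Pi.smul_apply, smul_eq_mul]
  ring

theorem nepResidual_eq_zero_iff : nepResidual β lam B u = 0 ↔ AU β B u *ᵥ u = lam • u :=
  sub_eq_zero

theorem continuous_nepResidual : Continuous (nepResidual β lam B) := by
  refine continuous_pi fun i => ?_
  simp only [nepResidual_apply]
  fun_prop

theorem JU_mulVec_apply (i : Fin n) :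
    (JU β lam B v *ᵥ w) i = 3 * β * v i ^ 2 * w i + (B *ᵥ w) i - lam * w i := by
  simp only [JU, sub_mulVec, add_mulVec, smul_mulVec, mulVec_diagonal, one_mulVec,
    Pi.sub_apply, Pi.add_apply, Pi.smul_apply, smul_eq_mul]
  ring

theorem IsZMatrix.JU (hB : IsZMatrix B) : IsZMatrix (JU β lam B v) := by
  intro i j hij
  simpa [_root_.JU, diagonal_apply_ne _ hij, one_apply_ne hij] using hB i j hij

theorem JU_mulVec_root_apply (hu : nepResidual β lam B u = 0) (i : Fin n) :
    (JU β lam B v *ᵥ u) i = β * u i * (3 * v i ^ 2 - u i ^ 2) := by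
  have := congrFun hu i
  rw [nepResidual_apply, Pi.zero_apply] at this
  rw [JU_mulVec_apply]
  linear_combination this

theorem nepResidual_smul_pos {μ α : ℝ} {p : Fin n → ℝ} (hp : B *ᵥ p = μ • p)
    (hαp : ∀ i, 0 < α * p i) (hα : ∀ i, lam - μ < β * (α * p i) ^ 2) (i : Fin n) :
    0 < nepResidual β lam B (α • p) i := by
  have hF : nepResidual β lam B (α • p) i = α * p i * (β * (α * p i) ^ 2 - (lam - μ)) := by
    rw [nepResidual_apply, mulVec_smul, hp]
    simp only [Pi.smul_apply, smul_eq_mul]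
    ring
  rw [hF]
  exact mul_pos (hαp i) (sub_pos.2 (hα i))

section NewtonStep

variable (hw : JU β lam B v *ᵥ w = fun i => 2 * β * v i ^ 3)
include hw

theorem JU_mulVec_sub_newton : JU β lam B v *ᵥ (v - w) = nepResidual β lam B v := by
  ext i
  rw [mulVec_sub, Pi.sub_apply, hw, JU_mulVec_apply, nepResidual_apply]
  ring

theorem JU_mulVec_newton_sub_root_apply (hu : nepResidual β lam B u = 0) (i : Fin n) :
    (JU β lam B v *ᵥ (w - u)) i = β * (v i - u i) ^ 2 * (2 * v i + u i) := by
  rw [mulVec_sub, Pi.sub_apply, hw, JU_mulVec_root_apply hu]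
  ring

theorem nepResidual_newton_apply (i : Fin n) :
    nepResidual β lam B w i = β * (w i - v i) ^ 2 * (w i + 2 * v i) := by
  have := congrFun hw i
  rw [JU_mulVec_apply] at this
  rw [nepResidual_apply]
  linear_combination this

theorem newton_step_pos (hB : IsZMatrix B) (hβ : 0 < β) (hu : ∀ i, 0 < u i)
    (hroot : nepResidual β lam B u = 0) (huv : ∀ i, u i < v i)
    (hres : ∀ i, 0 < nepResidual β lam B v i) :
    (∀ i, u i < w i ∧ w i < v i) ∧ ∀ i, 0 < nepResidual β lam B w i := by
  have hJ : IsZMatrix (JU β lam B v) := hB.JU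
  have hJu : ∀ i, 0 < (JU β lam B v *ᵥ u) i := fun i => by
    rw [JU_mulVec_root_apply hroot]
    exact mul_pos (mul_pos hβ (hu i)) (by nlinarith [huv i, hu i])
  have huw : ∀ i, u i < w i := fun i => sub_pos.1 <| hJ.pos_of_mulVec_pos hu hJu (fun i => by
    rw [JU_mulVec_newton_sub_root_apply hw hroot]
    exact mul_pos (mul_pos hβ (pow_pos (sub_pos.2 (huv i)) 2)) (by linarith [huv i, hu i])) i
  have hwv : ∀ i, w i < v i := fun i => sub_pos.1 <|
    hJ.pos_of_mulVec_pos hu hJu (by rwa [JU_mulVec_sub_newton hw]) i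
  refine ⟨fun i => ⟨huw i, hwv i⟩, fun i => ?_⟩
  rw [nepResidual_newton_apply hw]
  exact mul_pos (mul_pos hβ (sq_pos_of_ne_zero (sub_ne_zero.2 (hwv i).ne)))
    (by linarith [huw i, hwv i, hu i])

end NewtonStep

theorem nepResidual_eq_zero_of_tendsto_newton {x : ℕ → Fin n → ℝ} {L : Fin n → ℝ}
    (hx : ∀ k, JU β lam B (x k) *ᵥ x (k + 1) = fun i => 2 * β * x k i ^ 3)
    (hL : Tendsto x atTop (𝓝 L)) : nepResidual β lam B L = 0 := by
  have hL' : Tendsto (fun k => x (k + 1)) atTop (𝓝 L) := hL.comp (tendsto_add_atTop_nat 1)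
  refine tendsto_nhds_unique ((continuous_nepResidual.tendsto L).comp hL') ?_
  simp only [Function.comp_def, funext fun k => funext (nepResidual_newton_apply (hx k))]
  refine tendsto_pi_nhds.2 fun i => ?_
  have hLi := tendsto_pi_nhds.1 hL i
  have hLi' := tendsto_pi_nhds.1 hL' i
  simpa using (tendsto_const_nhds (x := β)).mul ((hLi'.sub hLi).pow 2) |>.mul
    (hLi'.add (tendsto_const_nhds (x := (2 : ℝ)).mul hLi))

end Newton

theorem stmt6_general {n : ℕ} (B : Matrix (Fin n) (Fin n) ℝ) (β lam α : ℝ)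
    (hB3 : IsNsMMat B) (hβ : 0 < β)
    (p : Fin n → ℝ) (hpe : B.mulVec p = smallestEig B • p)
    (ustar : Fin n → ℝ) (hstar : ∀ i, 0 < ustar i)
    (hstareq : (AU β B ustar).mulVec ustar = lam • ustar)
    (hstaru : ∀ w : Fin n → ℝ, (∀ i, 0 < w i) →
      (AU β B w).mulVec w = lam • w → w = ustar)
    (v : ℕ → Fin n → ℝ) (hv0 : v 0 = α • p)
    (hα1 : ∀ i, ustar i < α * p i)
    (hα2 : ∀ i, lam - smallestEig B < β * (α * p i) ^ 2)
    (hrec : ∀ k, (JU β lam B (v k)).mulVec (v (k + 1)) = fun i => 2 * β * (v k i) ^ 3) :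
    (∀ k, ∀ i, ustar i < v (k + 1) i ∧ v (k + 1) i < v k i) ∧
    Filter.Tendsto v Filter.atTop (nhds ustar) := by
  have hroot : nepResidual β lam B ustar = 0 := nepResidual_eq_zero_iff.2 hstareq
  have hstep k (hk : ∀ i, ustar i < v k i) (hres : ∀ i, 0 < nepResidual β lam B (v k) i) :=
    newton_step_pos (hrec k) hB3.isZMatrix hβ hstar hroot hk hres
  have hinv : ∀ k, (∀ i, ustar i < v k i) ∧ ∀ i, 0 < nepResidual β lam B (v k) i := by
    intro k
    induction k with
    | zero =>
      rw [hv0]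
      exact ⟨hα1, nepResidual_smul_pos hpe (fun i => (hstar i).trans (hα1 i)) hα2⟩
    | succ k ih => exact ⟨fun i => ((hstep k ih.1 ih.2).1 i).1, (hstep k ih.1 ih.2).2⟩
  have hmono k := (hstep k (hinv k).1 (hinv k).2).1
  refine ⟨hmono, ?_⟩
  have hanti : Antitone v := antitone_nat_of_succ_le fun k i => (hmono k i).2.le
  have hbdd : BddBelow (Set.range v) := ⟨ustar, by rintro _ ⟨k, rfl⟩ i; exact ((hinv k).1 i).le⟩
  obtain ⟨L, hL⟩ : ∃ L, Tendsto v atTop (𝓝 L) := ⟨_, tendsto_atTop_ciInf hanti hbdd⟩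
  have hLpos i : 0 < L i :=
    (hstar i).trans_le (ge_of_tendsto' (tendsto_pi_nhds.1 hL i) fun k => ((hinv k).1 i).le)
  rwa [← hstaru L hLpos (nepResidual_eq_zero_iff.1 (nepResidual_eq_zero_of_tendsto_newton hrec hL))]

theorem stmt6 {n : ℕ} [NeZero n] (B : Matrix (Fin n) (Fin n) ℝ) (β lam α : ℝ)
    (hB1 : B.IsSymm) (hB2 : MatIrred B) (hB3 : IsNsMMat B) (hβ : 0 < β)
    (p : Fin n → ℝ) (hp : ∀ i, 0 < p i) (hpe : B.mulVec p = smallestEig B • p)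
    (hlam : smallestEig B < lam)
    (ustar : Fin n → ℝ) (hstar : ∀ i, 0 < ustar i)
    (hstareq : (AU β B ustar).mulVec ustar = lam • ustar)
    (hstaru : ∀ w : Fin n → ℝ, (∀ i, 0 < w i) →
      (AU β B w).mulVec w = lam • w → w = ustar)
    (v : ℕ → Fin n → ℝ) (hv0 : v 0 = α • p)
    (hα1 : ∀ i, ustar i < α * p i)
    (hα2 : ∀ i, lam - smallestEig B < β * (α * p i) ^ 2)
    (hrec : ∀ k, (JU β lam B (v k)).mulVec (v (k + 1)) = fun i => 2 * β * (v k i) ^ 3) :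
    (∀ k, ∀ i, ustar i < v (k + 1) i ∧ v (k + 1) i < v k i) ∧
    Filter.Tendsto v Filter.atTop (nhds ustar) :=
  stmt6_general B β lam α hB3 hβ p hpe ustar hstar hstareq hstaru v hv0 hα1 hα2 hrec
end

section
/- Under the hypotheses of the Newton iteration for the unconstrained problem (B symmetric irreducible nonsingular M-matrix, β > 0, λ > λ_min(B), initial point u₀ = αp satisfying u₀ > u and min_i β(αp_i)² > λ − λ_min(B)), each Jacobian 3β·diag(u_k^[2]) + B − λI encountered along the iteration is a nonsingular M-matrix, so each Newton step is well-defined. -/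
open Matrix Filter Topology

/-!
Off the diagonal, `J(v) = 3β·diag(v^[2]) + B - λI` agrees with `B`, so it is a Z-matrix. Since
`A(u)u = λu`, it maps the positive solution `u` to `β(3v^[2] - u^[2]) ∘ u`, which is positive
as soon as `v > u`; every iterate satisfies `v_k > u`. A Z-matrix `J` sending a positive
vector `w` to a positive vector is a nonsingular M-matrix: for large `s`, the nonnegative matrix
`sI - J` maps `w` below `(s - ε)w`, and comparing an eigenvector `z` with `w` at an index
maximizing `|z_i| / w_i` bounds every eigenvalue by `s - ε`.
-/

lemma exists_pos_forall_le_of_finite {ι : Type*} [Finite ι] {f : ι → ℝ} (hf : ∀ i, 0 < f i) :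
    ∃ ε > 0, ∀ i, ε ≤ f i := by
  cases isEmpty_or_nonempty ι
  · exact ⟨1, one_pos, isEmptyElim⟩
  · obtain ⟨i, hi⟩ := Finite.exists_min f
    exact ⟨f i, hf i, hi⟩

section Comparison

variable {ι : Type*} [Fintype ι] {A : Matrix ι ι ℝ}

-- Compare `m` with `t • w` at an index `i` maximizing `m i / w i`.
theorem le_of_smul_le_mulVec_of_mulVec_le_smul (hA : ∀ i j, 0 ≤ A i j) {m w : ι → ℝ}
    {ρ r : ℝ} (hm : 0 ≤ m) (hm0 : m ≠ 0) (hw : ∀ i, 0 < w i) (hAm : ρ • m ≤ A *ᵥ m)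
    (hAw : A *ᵥ w ≤ r • w) : ρ ≤ r := by
  obtain ⟨j, hj⟩ : ∃ j, m j ≠ 0 := by
    by_contra! h
    exact hm0 (funext h)
  have : Nonempty ι := ⟨j⟩
  obtain ⟨i, hi⟩ := Finite.exists_max fun i => m i / w i
  set t := m i / w i
  have ht : 0 < t := (div_pos ((hm j).lt_of_ne' hj) (hw j)).trans_le (hi j)
  have hmt : m ≤ t • w := fun k => (div_le_iff₀ (hw k)).1 (hi k)
  have hmi : m i = t * w i := (div_mul_cancel₀ _ (hw i).ne').symm
  have key : ρ * m i ≤ r * m i :=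
    calc ρ * m i ≤ (A *ᵥ m) i := hAm i
      _ ≤ (A *ᵥ (t • w)) i := dotProduct_le_dotProduct_of_nonneg_left hmt (hA i)
      _ = t * (A *ᵥ w) i := by rw [mulVec_smul]; rfl
      _ ≤ t * (r * w i) := mul_le_mul_of_nonneg_left (hAw i) ht.le
      _ = r * m i := by rw [hmi]; ring
  exact le_of_mul_le_mul_right key (hmi ▸ mul_pos ht (hw i))

theorem norm_le_of_mem_spectrum_of_mulVec_le [DecidableEq ι] (hA : ∀ i j, 0 ≤ A i j)
    {w : ι → ℝ} (hw : ∀ i, 0 < w i) {r : ℝ} (hAw : A *ᵥ w ≤ r • w) {μ : ℂ}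
    (hμ : μ ∈ spectrum ℂ (A.map (fun x => (x : ℂ)))) : ‖μ‖ ≤ r := by
  rw [← spectrum_toLin', ← Module.End.hasEigenvalue_iff_mem_spectrum] at hμ
  obtain ⟨z, hz⟩ := hμ.exists_hasEigenvector
  have hAz : A.map (fun x => (x : ℂ)) *ᵥ z = μ • z := by
    rw [← toLin'_apply]
    exact hz.apply_eq_smul
  refine le_of_smul_le_mulVec_of_mulVec_le_smul hA (m := fun i => ‖z i‖)
    (fun i => norm_nonneg _) (fun h => hz.2 (funext fun i => norm_eq_zero.1 (congrFun h i)))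
    hw (fun i => ?_) hAw
  calc ‖μ‖ * ‖z i‖ = ‖∑ j, (A i j : ℂ) * z j‖ := by
        rw [← norm_mul, ← smul_eq_mul, ← Pi.smul_apply, ← hAz]; rfl
    _ ≤ ∑ j, ‖(A i j : ℂ) * z j‖ := norm_sum_le _ _
    _ = (A *ᵥ fun i => ‖z i‖) i := by
        simp only [norm_mul, Complex.norm_real, Real.norm_of_nonneg (hA i _)]; rfl

end Comparison

theorem specRad_le_of_mulVec_le {n : ℕ} {A : Matrix (Fin n) (Fin n) ℝ} (hA : MatNonneg A)
    {w : Fin n → ℝ} (hw : ∀ i, 0 < w i) {r : ℝ} (hr : 0 ≤ r) (hAw : A *ᵥ w ≤ r • w) :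
    specRad A ≤ r :=
  Real.sSup_le (fun _ ⟨_, hμ, hnorm⟩ => hnorm ▸ norm_le_of_mem_spectrum_of_mulVec_le hA hw hAw hμ) hr

theorem isNsMMat_of_mulVec_pos {n : ℕ} {J : Matrix (Fin n) (Fin n) ℝ}
    (hJ : ∀ i j, i ≠ j → J i j ≤ 0) {w : Fin n → ℝ} (hw : ∀ i, 0 < w i)
    (hJw : ∀ i, 0 < (J *ᵥ w) i) : IsNsMMat J := by
  obtain ⟨ε, hε, hεJ⟩ := exists_pos_forall_le_of_finite fun i => div_pos (hJw i) (hw i)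
  set s := ε + ∑ i, |J i i|
  have hdiag : ∀ i, J i i ≤ s - ε := fun i => by
    rw [add_sub_cancel_left]
    exact (le_abs_self _).trans
      (Finset.single_le_sum (fun i _ => abs_nonneg (J i i)) (Finset.mem_univ i))
  have hA : MatNonneg (s • 1 - J) := fun i j => by
    rcases eq_or_ne i j with rfl | hij
    · simpa using (hdiag i).trans (by linarith)
    · simpa [one_apply_ne hij] using hJ i j hij
  have hAw : (s • 1 - J) *ᵥ w ≤ (s - ε) • w := fun i => by
    have := (le_div_iff₀ (hw i)).1 (hεJ i)
    simp only [sub_mulVec, smul_mulVec, one_mulVec, Pi.sub_apply, Pi.smul_apply, smul_eq_mul]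
    linarith
  have hsε : 0 ≤ s - ε := by
    rw [add_sub_cancel_left]
    exact Finset.sum_nonneg fun i _ => abs_nonneg (J i i)
  exact ⟨s, s • 1 - J, hA, (specRad_le_of_mulVec_le hA hw hsε hAw).trans_lt (by linarith),
    (sub_sub_cancel _ _).symm⟩

theorem IsNsMMat.apply_nonpos_of_ne {n : ℕ} {B : Matrix (Fin n) (Fin n) ℝ} (hB : IsNsMMat B)
    {i j : Fin n} (hij : i ≠ j) : B i j ≤ 0 := by
  obtain ⟨s, A, hA, -, rfl⟩ := hB
  simpa [one_apply_ne hij] using hA i j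

theorem JU_apply_of_ne {n : ℕ} (β lam : ℝ) (B : Matrix (Fin n) (Fin n) ℝ) (u : Fin n → ℝ)
    {i j : Fin n} (hij : i ≠ j) : JU β lam B u i j = B i j := by
  simp [JU, one_apply_ne hij, diagonal_apply_ne _ hij]

theorem JU_mulVec_of_AU_mulVec {n : ℕ} {β lam : ℝ} {B : Matrix (Fin n) (Fin n) ℝ}
    {u : Fin n → ℝ} (hu : AU β B u *ᵥ u = lam • u) (v : Fin n → ℝ) :
    JU β lam B v *ᵥ u = fun i => β * (3 * v i ^ 2 - u i ^ 2) * u i := by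
  funext i
  have hui := congrFun hu i
  simp only [AU, JU, add_mulVec, sub_mulVec, smul_mulVec, one_mulVec, Pi.add_apply,
    Pi.sub_apply, Pi.smul_apply, mulVec_diagonal, smul_eq_mul] at hui ⊢
  linarith

theorem stmt7_general {n : ℕ} (B : Matrix (Fin n) (Fin n) ℝ) (β lam α : ℝ)
    (hB3 : IsNsMMat B) (hβ : 0 < β)
    (p : Fin n → ℝ)
    (ustar : Fin n → ℝ) (hstar : ∀ i, 0 < ustar i)
    (hstareq : (AU β B ustar).mulVec ustar = lam • ustar)
    (v : ℕ → Fin n → ℝ) (hv0 : v 0 = α • p)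
    (hα1 : ∀ i, ustar i < α * p i)
    (hmono : ∀ k, ∀ i, ustar i < v (k + 1) i ∧ v (k + 1) i < v k i) :
    ∀ k, IsNsMMat (JU β lam B (v k)) := by
  have hlow : ∀ k i, ustar i < v k i
    | 0, i => by simpa [hv0] using hα1 i
    | k + 1, i => (hmono k i).1
  intro k
  refine isNsMMat_of_mulVec_pos (fun i j hij => ?_) hstar fun i => ?_
  · rw [JU_apply_of_ne β lam B _ hij]
    exact hB3.apply_nonpos_of_ne hij
  · rw [JU_mulVec_of_AU_mulVec hstareq]
    have hgap : 0 < 3 * v k i ^ 2 - ustar i ^ 2 := by nlinarith [hstar i, hlow k i]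
    exact mul_pos (mul_pos hβ hgap) (hstar i)

theorem stmt7 {n : ℕ} [NeZero n] (B : Matrix (Fin n) (Fin n) ℝ) (β lam α : ℝ)
    (hB1 : B.IsSymm) (hB2 : MatIrred B) (hB3 : IsNsMMat B) (hβ : 0 < β)
    (p : Fin n → ℝ) (hp : ∀ i, 0 < p i) (hpe : B.mulVec p = smallestEig B • p)
    (hlam : smallestEig B < lam)
    (ustar : Fin n → ℝ) (hstar : ∀ i, 0 < ustar i)
    (hstareq : (AU β B ustar).mulVec ustar = lam • ustar)
    (v : ℕ → Fin n → ℝ) (hv0 : v 0 = α • p)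
    (hα1 : ∀ i, ustar i < α * p i)
    (hα2 : ∀ i, lam - smallestEig B < β * (α * p i) ^ 2)
    (hrec : ∀ k, (JU β lam B (v k)).mulVec (v (k + 1)) = fun i => 2 * β * (v k i) ^ 3)
    (hmono : ∀ k, ∀ i, ustar i < v (k + 1) i ∧ v (k + 1) i < v k i) :
    ∀ k, IsNsMMat (JU β lam B (v k)) :=
  stmt7_general B β lam α hB3 hβ p ustar hstar hstareq v hv0 hα1 hmono
end
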